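/- arXiv:1206.5397 — 2 statements merged into one kernel-verified Lean document; each statement's English description precedes it below -/
import Mathlib

section
/- For an integer k ≥ 3, every k-chordal graph has a k-simplicial vertex. -/
open SimpleGraph

variable {V : Type*}

/-- Open neighbourhood of a set of vertices. -/
def setNbhd (G : SimpleGraph V) (A : Set V) : Set V :=
  {x | x ∉ A ∧ ∃ a ∈ A, G.Adj a x}

/-- Closed neighbourhood of a set of vertices. -/
def closedNbhd (G : SimpleGraph V) (A : Set V) : Set V :=
  A ∪ setNbhd G A

/-- `A` is a connected non-dominating set: `G[A]` is connected and `N[A] ⊊ V`. -/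
def ConnNonDom (G : SimpleGraph V) (A : Set V) : Prop :=
  (G.induce A).Connected ∧ closedNbhd G A ≠ Set.univ

/-- `A` is a maximal connected non-dominating set. -/
def MaxConnNonDom (G : SimpleGraph V) (A : Set V) : Prop :=
  ConnNonDom G A ∧ ∀ A' : Set V, A ⊆ A' → ConnNonDom G A' → A' = A

/-- `G` is not complete. -/
def NonComplete (G : SimpleGraph V) : Prop :=
  ∃ u v : V, u ≠ v ∧ ¬ G.Adj u v

/-- A chordless (induced) path. -/
def IsInducedPath (G : SimpleGraph V) {x y : V} (p : G.Walk x y) : Prop :=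
  p.IsPath ∧ ∀ u w : V, u ∈ p.support → w ∈ p.support → G.Adj u w → s(u, w) ∈ p.edges

/-- A chordless (induced) cycle. -/
def IsInducedCycle (G : SimpleGraph V) {v : V} (c : G.Walk v v) : Prop :=
  c.IsCycle ∧ ∀ u w : V, u ∈ c.support → w ∈ c.support → G.Adj u w → s(u, w) ∈ c.edges

/-- `G` is `k`-chordal: no induced cycle of length greater than `k`. -/
def KChordal (G : SimpleGraph V) (k : ℕ) : Prop :=
  ∀ ⦃v : V⦄ (c : G.Walk v v), IsInducedCycle G c → c.length ≤ k

/-- `u` is an internal vertex of the path `p`. -/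
def InternalVert (G : SimpleGraph V) {x y : V} (p : G.Walk x y) (u : V) : Prop :=
  u ∈ p.support ∧ u ≠ x ∧ u ≠ y

/-- Condition (C1): any two distinct neighbours of `v` are at distance at most `k-2`
in `G - v`. -/
def SimpC1 (G : SimpleGraph V) (k : ℕ) (v : V) : Prop :=
  ∀ x y : V, G.Adj v x → G.Adj v y → x ≠ y →
    ∃ (hx : x ≠ v) (hy : y ≠ v)
      (p : (G.induce {u : V | u ≠ v}).Walk ⟨x, hx⟩ ⟨y, hy⟩), p.length ≤ k - 2

/-- Condition (C2): every induced path between non-adjacent neighbours of `v` whose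
internal vertices avoid `N[v]` has at most `k-2` edges. -/
def SimpC2 (G : SimpleGraph V) (k : ℕ) (v : V) : Prop :=
  ∀ x y : V, G.Adj v x → G.Adj v y → ¬ G.Adj x y → x ≠ y →
    ∀ p : G.Walk x y, IsInducedPath G p →
      (∀ u : V, InternalVert G p u → u ≠ v ∧ ¬ G.Adj v u) →
      p.length ≤ k - 2

/-- `v` is `k`-simplicial in `G`. -/
def KSimplicial (G : SimpleGraph V) (k : ℕ) (v : V) : Prop :=
  SimpC1 G k v ∧ SimpC2 G k v

/-- Vertices at position `≥ i` in the ordering `σ`. -/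
def laterSet {V : Type*} [Fintype V] (σ : Fin (Fintype.card V) ≃ V)
    (i : Fin (Fintype.card V)) : Set V := {w | i ≤ σ.symm w}

/-- `σ` is a `k`-simplicial ordering of the vertices of `G`. -/
def KSimplicialOrdering {V : Type*} [Fintype V] (G : SimpleGraph V) (k : ℕ)
    (σ : Fin (Fintype.card V) ≃ V) : Prop :=
  ∀ i : Fin (Fintype.card V),
    KSimplicial (G.induce (laterSet σ i)) k ⟨σ i, by simp [laterSet]⟩

/-- `S` separates `a` from `b`. -/
def IsSeparator (G : SimpleGraph V) (a b : V) (S : Set V) : Prop :=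
  a ∉ S ∧ b ∉ S ∧ ∀ p : G.Walk a b, ∃ s ∈ S, s ∈ p.support

/-- `S` is a minimal `(a,b)`-vertex separator. -/
def IsMinSeparator (G : SimpleGraph V) (a b : V) (S : Set V) : Prop :=
  IsSeparator G a b S ∧ ∀ T : Set V, T ⊂ S → ¬ IsSeparator G a b T

/-- `S` is a minimal vertex separator of `G`. -/
def IsMinVertexSeparator (G : SimpleGraph V) (S : Set V) : Prop :=
  ∃ a b : V, a ≠ b ∧ ¬ G.Adj a b ∧ IsMinSeparator G a b S

/-- `u` lies in the connected component `c` of `G - S`. -/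
def InComponent (G : SimpleGraph V) (S : Set V)
    (c : (G.induce Sᶜ).ConnectedComponent) (u : V) : Prop :=
  ∃ h : u ∈ Sᶜ, (G.induce Sᶜ).connectedComponentMk ⟨u, h⟩ = c

/-- `v` is 3-simplicial: its neighbourhood is a clique. -/
def Simplicial3 (G : SimpleGraph V) (v : V) : Prop :=
  ∀ x y : V, G.Adj v x → G.Adj v y → x ≠ y → G.Adj x y

/-!
Condition (C2) holds at every vertex of a `k`-chordal graph: an induced path `P` between
neighbours `x, y` of `v` whose interior avoids `N[v]` closes up with `v` to an induced cycle of
length `|P| + 2 ≤ k`.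

Condition (C1) is proved by induction on the number of vertices. In a complete graph every vertex
works. Otherwise take an inclusion-maximal connected non-dominating set `A`, and let
`S = N(A)` and `B = V ∖ N[A] ≠ ∅`. By maximality, `A ∪ {s}` dominates for each `s ∈ S`, so `S` is
completely joined to `B`. By induction `G[B]` has a vertex `v` satisfying (C1), and `v` satisfies
(C1) in `G`: its neighbours lie in `S ∪ B`; two of them in `B` are handled inside `G[B]`, a pair
from `S × B` is adjacent, and two non-adjacent ones in `S` are joined by an induced path through
`A`, whose interior is not adjacent to `v`, so the (C2) argument bounds its length by `k - 2`.
-/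

namespace SimpleGraph

variable {W : Type*} {G : SimpleGraph V} {G' : SimpleGraph W} {A : Set V} {a s u v x y z : V}
  {k : ℕ}

theorem isInducedPath_iff {p : G.Walk x y} : IsInducedPath G p ↔ p.IsPath ∧ p.IsChordless := by
  rw [Walk.isChordless_iff_forall_mem_edges]
  exact Iff.rfl

theorem isInducedCycle_iff {c : G.Walk v v} : IsInducedCycle G c ↔ c.IsCycle ∧ c.IsChordless := by
  rw [Walk.isChordless_iff_forall_mem_edges]
  exact Iff.rfl

namespace Walk

theorem IsChordless.map (f : G ↪g G') {p : G.Walk x y} (hp : p.IsChordless) :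
    (p.map f.toHom).IsChordless := by
  rw [isChordless_iff_forall_mem_edges] at hp ⊢
  intro u' v' hu hv hadj
  simp only [support_map, List.mem_map] at hu hv
  obtain ⟨u, hu, rfl⟩ := hu
  obtain ⟨v, hv, rfl⟩ := hv
  rw [edges_map]
  exact List.mem_map.mpr ⟨s(u, v), hp hu hv (f.map_adj_iff.mp hadj), rfl⟩

theorem isChordless_of_length_eq_dist (p : G.Walk x y) (hp : p.length = G.dist x y) :
    p.IsChordless := by
  have hshort : ∀ i j, i + 1 < j → j ≤ p.length → ¬ G.Adj (p.getVert i) (p.getVert j) := by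
    intro i j hij hj hadj
    have := G.dist_le ((p.take i).append (cons hadj (p.drop j)))
    simp only [length_append, length_cons, take_length, drop_length] at this
    omega
  have hchord : ∀ i j, i < j → j ≤ p.length → G.Adj (p.getVert i) (p.getVert j) →
      s(p.getVert i, p.getVert j) ∈ p.edges := by
    intro i j hij hj hadj
    obtain rfl : j = i + 1 := by by_contra h; exact hshort i j (by omega) hj hadj
    exact (mk_mem_edges_iff_exists p).mpr ⟨i, by omega, rfl⟩
  rw [isChordless_iff_forall_mem_edges]
  intro u v hu hv hadj
  obtain ⟨i, rfl, hi⟩ := mem_support_iff_exists_getVert.mp hu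
  obtain ⟨j, rfl, hj⟩ := mem_support_iff_exists_getVert.mp hv
  rcases lt_trichotomy i j with hij | rfl | hji
  · exact hchord i j hij hj hadj
  · exact absurd hadj (G.loopless.irrefl _)
  · exact Sym2.eq_swap ▸ hchord j i hji hi hadj.symm

section ConsConcat

variable {p : G.Walk x y} (hvx : G.Adj v x) (hvy : G.Adj v y)

theorem IsPath.isCycle_cons_concat (hp : p.IsPath) (hxy : x ≠ y) (hv : v ∉ p.support) :
    (cons hvx (p.concat hvy.symm)).IsCycle := by
  refine (cons_isCycle_iff _ hvx).mpr ⟨hp.concat hv _, ?_⟩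
  rw [edges_concat, List.concat_eq_append, List.mem_append, List.mem_singleton, not_or]
  refine ⟨fun h => hv (p.fst_mem_support_of_mem_edges h), fun h => ?_⟩
  rcases Sym2.eq_iff.mp h with ⟨rfl, -⟩ | ⟨-, rfl⟩
  exacts [hvy.ne rfl, hxy rfl]

theorem IsChordless.cons_concat (hp : p.IsChordless)
    (hnbr : ∀ w ∈ p.support, G.Adj v w → w = x ∨ w = y) :
    (cons hvx (p.concat hvy.symm)).IsChordless := by
  have hsupp : ∀ w ∈ (cons hvx (p.concat hvy.symm)).support, w = v ∨ w ∈ p.support := by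
    simp only [support_cons, support_concat, List.mem_cons, List.mem_append]
    tauto
  have hedges : (cons hvx (p.concat hvy.symm)).edges = s(v, x) :: (p.edges ++ [s(y, v)]) := by
    rw [edges_cons, edges_concat, List.concat_eq_append]
  have hspoke : ∀ w ∈ p.support, G.Adj v w →
      s(v, w) ∈ (cons hvx (p.concat hvy.symm)).edges := by
    intro w hw hadj
    rw [hedges]
    rcases hnbr w hw hadj with rfl | rfl
    · exact List.mem_cons_self
    · simp [Sym2.eq_swap]
  rw [isChordless_iff_forall_mem_edges] at hp ⊢
  intro a b ha hb hab
  rcases hsupp a ha with rfl | ha' <;> rcases hsupp b hb with rfl | hb'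
  · exact absurd hab (G.loopless.irrefl _)
  · exact hspoke b hb' hab
  · exact Sym2.eq_swap ▸ hspoke a ha' hab.symm
  · rw [hedges]
    exact List.mem_cons_of_mem _ (List.mem_append_left _ (hp ha' hb' hab))

theorem length_cons_concat : (cons hvx (p.concat hvy.symm)).length = p.length + 2 := by
  rw [length_cons, length_concat]

end ConsConcat

end Walk

theorem Reachable.exists_isPath_isChordless (h : G.Reachable x y) :
    ∃ p : G.Walk x y, p.IsPath ∧ p.IsChordless := by
  obtain ⟨p, hp⟩ := h.exists_walk_length_eq_dist
  exact ⟨p, p.isPath_of_length_eq_dist hp, p.isChordless_of_length_eq_dist hp⟩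

theorem KChordal.comap (f : G ↪g G') (h : KChordal G' k) : KChordal G k := by
  intro v c hc
  rw [isInducedCycle_iff] at hc
  have := h (c.map f.toHom) (isInducedCycle_iff.mpr
    ⟨(Walk.isCycle_map_iff_of_injective f.injective).mpr hc.1, hc.2.map f⟩)
  rwa [Walk.length_map] at this

theorem KChordal.induce (h : KChordal G k) (s : Set V) : KChordal (G.induce s) k :=
  h.comap (Embedding.induce s)

theorem KChordal.length_le_of_isPath_of_isChordless (h : KChordal G k)
    (hvx : G.Adj v x) (hvy : G.Adj v y) (hxy : x ≠ y) {p : G.Walk x y} (hp : p.IsPath)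
    (hpc : p.IsChordless) (hv : v ∉ p.support)
    (hnbr : ∀ w ∈ p.support, G.Adj v w → w = x ∨ w = y) : p.length ≤ k - 2 := by
  have := h _ (isInducedCycle_iff.mpr
    ⟨hp.isCycle_cons_concat hvx hvy hxy hv, hpc.cons_concat hvx hvy hnbr⟩)
  rw [Walk.length_cons_concat hvx hvy] at this
  omega

theorem KChordal.simpC2 (h : KChordal G k) (v : V) : SimpC2 G k v := by
  intro x y hvx hvy _ hxy p hp hint
  rw [isInducedPath_iff] at hp
  have hint' : ∀ w ∈ p.support, w ≠ x → w ≠ y → w ≠ v ∧ ¬ G.Adj v w :=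
    fun w hw hwx hwy => hint w ⟨hw, hwx, hwy⟩
  refine h.length_le_of_isPath_of_isChordless hvx hvy hxy hp.1 hp.2 (fun hv => ?_) ?_
  · exact (hint' v hv hvx.ne hvy.ne).1 rfl
  · intro w hw hadj
    by_contra! hne
    exact (hint' w hw hne.1 hne.2).2 hadj

theorem connected_induce_insert (hA : (G.induce A).Connected) (ha : a ∈ A) (has : G.Adj a s) :
    (G.induce (insert s A)).Connected := by
  rw [Set.insert_eq]
  exact connected_induce_union Preconnected.of_subsingleton hA.preconnected rfl ha has.symm

theorem connNonDom_singleton (huv : u ≠ v) (hadj : ¬ G.Adj u v) : ConnNonDom G {u} := by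
  refine ⟨⟨Preconnected.of_subsingleton⟩, fun hdom => ?_⟩
  rcases hdom.symm ▸ Set.mem_univ v with rfl | ⟨-, _, rfl, hadj'⟩
  exacts [huv rfl, hadj hadj']

theorem exists_maxConnNonDom [Finite V] (h : NonComplete G) : ∃ A, MaxConnNonDom G A := by
  obtain ⟨u, v, huv, hadj⟩ := h
  obtain ⟨A, -, hA⟩ := Finite.exists_le_maximal (connNonDom_singleton huv hadj)
  exact ⟨A, hA.1, fun A' hAA' hA' => (hA.2 hA' hAA').antisymm hAA'⟩

theorem not_adj_of_notMem_closedNbhd (hv : v ∉ closedNbhd G A) (ha : a ∈ A) : ¬ G.Adj a v :=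
  fun hav => hv (Or.inr ⟨fun hvA => hv (Or.inl hvA), a, ha, hav⟩)

theorem mem_setNbhd_or_notMem_closedNbhd (hv : v ∉ closedNbhd G A) (hvz : G.Adj v z) :
    z ∈ setNbhd G A ∨ z ∉ closedNbhd G A := by
  by_cases hz : z ∈ closedNbhd G A
  · rcases hz with hzA | hz
    · exact absurd hvz.symm (not_adj_of_notMem_closedNbhd hv hzA)
    · exact Or.inl hz
  · exact Or.inr hz

theorem MaxConnNonDom.adj_of_mem_setNbhd (hA : MaxConnNonDom G A) (hs : s ∈ setNbhd G A)
    (hz : z ∉ closedNbhd G A) : G.Adj s z := by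
  obtain ⟨hsA, a, ha, has⟩ := hs
  have hdom : closedNbhd G (insert s A) = Set.univ := by
    by_contra hnd
    have := hA.2 _ (Set.subset_insert s A) ⟨connected_induce_insert hA.1.1 ha has, hnd⟩
    exact hsA (this ▸ Set.mem_insert s A)
  rcases hdom.symm ▸ Set.mem_univ z with (rfl | hzA) | ⟨-, c, rfl | hc, hcz⟩
  · exact absurd (Or.inr ⟨hsA, a, ha, has⟩) hz
  · exact absurd (Or.inl hzA) hz
  · exact hcz
  · exact absurd hcz (not_adj_of_notMem_closedNbhd hz hc)

theorem exists_walk_induce_ne_of_walk {m : ℕ} (p : G.Walk x y) (hv : v ∉ p.support)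
    (hp : p.length ≤ m) : ∃ (hx : x ≠ v) (hy : y ≠ v)
      (q : (G.induce {u : V | u ≠ v}).Walk ⟨x, hx⟩ ⟨y, hy⟩), q.length ≤ m := by
  have hs : ∀ u ∈ p.support, u ∈ {u : V | u ≠ v} := fun u hu huv => hv (huv ▸ hu)
  refine ⟨_, _, p.induce _ hs, ?_⟩
  rwa [← Walk.length_map (Embedding.induce _).toHom, Walk.map_induce]

theorem exists_walk_induce_ne_of_adj (hk : 3 ≤ k) (hvx : G.Adj v x) (hvy : G.Adj v y)
    (hxy : G.Adj x y) : ∃ (hx : x ≠ v) (hy : y ≠ v)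
      (q : (G.induce {u : V | u ≠ v}).Walk ⟨x, hx⟩ ⟨y, hy⟩), q.length ≤ k - 2 := by
  refine exists_walk_induce_ne_of_walk hxy.toWalk ?_ (by rw [hxy.length_toWalk]; omega)
  simp [hvx.ne, hvy.ne]

theorem SimpC1.exists_walk_of_induce {s : Set V} {hv : v ∈ s}
    (h : SimpC1 (G.induce s) k ⟨v, hv⟩) (hx : x ∈ s) (hy : y ∈ s) (hvx : G.Adj v x)
    (hvy : G.Adj v y) (hxy : x ≠ y) : ∃ (hx : x ≠ v) (hy : y ≠ v)
      (q : (G.induce {u : V | u ≠ v}).Walk ⟨x, hx⟩ ⟨y, hy⟩), q.length ≤ k - 2 := by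
  obtain ⟨_, _, q, hq⟩ := h ⟨x, hx⟩ ⟨y, hy⟩ hvx hvy (fun h => hxy (congrArg Subtype.val h))
  let φ : (G.induce s).induce {u | u ≠ ⟨v, hv⟩} →g G.induce {u : V | u ≠ v} :=
    { toFun := fun u => ⟨u.1.1, fun h => u.2 (Subtype.ext h)⟩
      map_rel' := fun h => h }
  exact ⟨hvx.ne', hvy.ne', q.map φ, (Walk.length_map _ _).trans_le hq⟩

theorem KChordal.exists_short_path_of_mem_setNbhd (h : KChordal G k)
    (hA : (G.induce A).Connected) (hv : v ∉ closedNbhd G A) (hx : x ∈ setNbhd G A)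
    (hy : y ∈ setNbhd G A) (hvx : G.Adj v x) (hvy : G.Adj v y) (hxy : x ≠ y) :
    ∃ p : G.Walk x y, v ∉ p.support ∧ p.length ≤ k - 2 := by
  obtain ⟨-, ax, hax, haxx⟩ := hx
  obtain ⟨-, ay, hay, hayy⟩ := hy
  set T := insert x (insert y A)
  have hT : (G.induce T).Connected :=
    connected_induce_insert (connected_induce_insert hA hay hayy) (Or.inr hax) haxx
  obtain ⟨π, hπ, hπc⟩ :=
    (hT.preconnected ⟨x, Or.inl rfl⟩ ⟨y, Or.inr (Or.inl rfl)⟩).exists_isPath_isChordless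
  set p := π.map (Embedding.induce T).toHom
  have hpT : ∀ w ∈ p.support, w = x ∨ w = y ∨ w ∈ A := by
    intro w hw
    obtain ⟨w, -, rfl⟩ := List.mem_map.mp ((Walk.support_map _ _) ▸ hw)
    exact w.2
  have hvp : v ∉ p.support := by
    intro hvp
    rcases hpT v hvp with rfl | rfl | hvA
    exacts [G.loopless.irrefl _ hvx, G.loopless.irrefl _ hvy, hv (Or.inl hvA)]
  refine ⟨p, hvp, h.length_le_of_isPath_of_isChordless hvx hvy hxy
    (hπ.map Subtype.val_injective) (hπc.map _) hvp fun w hw hvw => ?_⟩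
  rcases hpT w hw with hwx | hwy | hwA
  exacts [Or.inl hwx, Or.inr hwy, absurd hvw.symm (not_adj_of_notMem_closedNbhd hv hwA)]

theorem KChordal.simpC1_of_induce_compl_closedNbhd (h : KChordal G k) (hk : 3 ≤ k)
    (hA : MaxConnNonDom G A) (hv : v ∉ closedNbhd G A)
    (hB : SimpC1 (G.induce (closedNbhd G A)ᶜ) k ⟨v, hv⟩) : SimpC1 G k v := by
  intro x y hvx hvy hxy
  by_cases hadj : G.Adj x y
  · exact exists_walk_induce_ne_of_adj hk hvx hvy hadj
  rcases mem_setNbhd_or_notMem_closedNbhd hv hvx with hx | hx <;>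
    rcases mem_setNbhd_or_notMem_closedNbhd hv hvy with hy | hy
  · obtain ⟨p, hpv, hp⟩ := h.exists_short_path_of_mem_setNbhd hA.1.1 hv hx hy hvx hvy hxy
    exact exists_walk_induce_ne_of_walk p hpv hp
  · exact absurd (hA.adj_of_mem_setNbhd hx hy) hadj
  · exact absurd (hA.adj_of_mem_setNbhd hy hx).symm hadj
  · exact hB.exists_walk_of_induce hx hy hvx hvy hxy

theorem KChordal.exists_simpC1 [Finite V] [Nonempty V] (hk : 3 ≤ k) (h : KChordal G k) :
    ∃ v, SimpC1 G k v := by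
  induction hn : Nat.card V using Nat.strong_induction_on generalizing V with
  | _ n ih =>
  by_cases hG : NonComplete G
  · obtain ⟨A, hA⟩ := exists_maxConnNonDom hG
    obtain ⟨b, hb⟩ := Set.nonempty_compl.mpr hA.1.2
    obtain ⟨⟨a, ha⟩⟩ := hA.1.1.nonempty
    have : Nonempty ↥(closedNbhd G A)ᶜ := ⟨⟨b, hb⟩⟩
    have hcard : Nat.card ↥(closedNbhd G A)ᶜ < n :=
      hn ▸ Finite.card_subtype_lt (p := (· ∈ (closedNbhd G A)ᶜ)) (not_not.mpr (Or.inl ha))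
    obtain ⟨⟨v, hv⟩, hvB⟩ := ih _ hcard (h.induce _) rfl
    exact ⟨v, h.simpC1_of_induce_compl_closedNbhd hk hA hv hvB⟩
  · obtain ⟨v⟩ := ‹Nonempty V›
    refine ⟨v, fun x y hvx hvy hxy => exists_walk_induce_ne_of_adj hk hvx hvy ?_⟩
    by_contra hadj
    exact hG ⟨x, y, hxy, hadj⟩

end SimpleGraph

theorem stmt7 [Fintype V] [Nonempty V] (G : SimpleGraph V) (k : ℕ) (hk : 3 ≤ k)
    (hch : KChordal G k) : ∃ v : V, KSimplicial G k v := by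
  obtain ⟨v, hv⟩ := hch.exists_simpC1 hk
  exact ⟨v, hv, hch.simpC2 v⟩
end

section
/- For a graph G with a vertex ordering π = [v_1, …, v_n] that is a k-simplicial ordering (k ≥ 3), there is no induced cycle C of length at least k+1: if such C existed, its minimum-indexed vertex v_i would have its two C-neighbours later in the ordering, and the v_j–v_l path along C would be an induced path of length at least k−1 in G[{v_i, …, v_n}] with internal vertices avoiding N[v_i], contradicting that v_i is k-simplicial. -/
open SimpleGraph

variable {V : Type*}

namespace SimpleGraph.Walk

variable {G : SimpleGraph V} {s : Set V}

lemma mem_support_induce_iff {u v : V} (p : G.Walk u v) (hp : ∀ x ∈ p.support, x ∈ s) (x : s) :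
    x ∈ (p.induce s hp).support ↔ (x : V) ∈ p.support := by
  simp

lemma mem_edges_induce_iff {u v : V} (p : G.Walk u v) (hp : ∀ x ∈ p.support, x ∈ s)
    (e : Sym2 s) : e ∈ (p.induce s hp).edges ↔ e.map (↑) ∈ p.edges := by
  have h : ((p.induce s hp).map (Embedding.induce s).toHom).edges = p.edges := by
    rw [map_induce]
    rfl
  rw [edges_map] at h
  rw [← h]
  exact (List.mem_map_of_injective (Sym2.map.injective Subtype.val_injective)).symm

@[simp]
lemma length_induce {u v : V} (p : G.Walk u v) (hp : ∀ x ∈ p.support, x ∈ s) :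
    (p.induce s hp).length = p.length := by
  have h := congrArg length (p.map_induce hp)
  rwa [length_map] at h

lemma IsPath.mk_notMem_edges_of_two_le_length {x y : V} {p : G.Walk x y} (hp : p.IsPath)
    (hlen : 2 ≤ p.length) : s(x, y) ∉ p.edges := by
  cases p with
  | nil => simp
  | cons hadj q =>
    rw [cons_isPath_iff] at hp
    rw [edges_cons, List.mem_cons]
    rintro (he | he)
    · rw [Sym2.eq_iff] at he
      rcases he with ⟨-, rfl⟩ | ⟨rfl, rfl⟩
      · simp [(isPath_iff_nil.1 hp.1).length_eq_zero] at hlen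
      · exact G.irrefl hadj
    · exact hp.2 (fst_mem_support_of_mem_edges q he)

end SimpleGraph.Walk

open Walk

namespace IsInducedCycle

variable {G : SimpleGraph V} {k : ℕ}

lemma rotate [DecidableEq V] {u v : V} {c : G.Walk v v} (hc : IsInducedCycle G c)
    (hu : u ∈ c.support) : IsInducedCycle G (c.rotate u hu) := by
  refine ⟨hc.1.rotate hu, fun a b ha hb hab => ?_⟩
  rw [(rotate_edges c u hu).mem_iff]
  exact hc.2 a b ((mem_support_rotate_iff c u hu).1 ha) ((mem_support_rotate_iff c u hu).1 hb) hab

lemma induce {s : Set V} {v : V} {c : G.Walk v v} (hc : IsInducedCycle G c)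
    (hs : ∀ x ∈ c.support, x ∈ s) : IsInducedCycle (G.induce s) (c.induce s hs) := by
  refine ⟨IsCycle.of_map (f := (Embedding.induce s).toHom) ?_, fun a b ha hb hab => ?_⟩
  · rw [map_induce]
    exact hc.1
  · rw [mem_support_induce_iff] at ha hb
    rw [mem_edges_induce_iff]
    exact hc.2 a b ha hb hab

section ConsConcat

variable {w x y : V} {h₁ : G.Adj w x} {p : G.Walk x y} {h₂ : G.Adj y w}

lemma isPath_and_notMem_of_cons_concat (hc : IsInducedCycle G (cons h₁ (p.concat h₂))) :
    p.IsPath ∧ w ∉ p.support :=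
  (concat_isPath_iff h₂).1 ((cons_isCycle_iff _ _).1 hc.1).1

lemma isInducedPath_of_cons_concat (hc : IsInducedCycle G (cons h₁ (p.concat h₂))) :
    IsInducedPath G p := by
  obtain ⟨hp, hw⟩ := hc.isPath_and_notMem_of_cons_concat
  refine ⟨hp, fun a b ha hb hab => ?_⟩
  have hwa : a ≠ w := ne_of_mem_of_not_mem ha hw
  have hwb : b ≠ w := ne_of_mem_of_not_mem hb hw
  have := hc.2 a b (by simp [ha]) (by simp [hb]) hab
  simp only [edges_cons, edges_concat, List.concat_eq_append, List.mem_cons,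
    List.mem_append, Sym2.eq_iff] at this
  grind

lemma eq_or_eq_of_adj_of_cons_concat (hc : IsInducedCycle G (cons h₁ (p.concat h₂))) {u : V}
    (hu : u ∈ p.support) (hwu : G.Adj w u) : u = x ∨ u = y := by
  have hw := hc.isPath_and_notMem_of_cons_concat.2
  have := hc.2 w u (by simp) (by simp [hu]) hwu
  simp only [edges_cons, edges_concat, List.concat_eq_append, List.mem_cons,
    List.mem_append, Sym2.eq_iff] at this
  have := fun h : s(w, u) ∈ p.edges => hw (p.fst_mem_support_of_mem_edges h)
  grind

end ConsConcat

lemma length_le_of_simpC2 {w : V} {c : G.Walk w w} (hc : IsInducedCycle G c)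
    (hlen : 4 ≤ c.length) (hC2 : SimpC2 G k w) : c.length ≤ k := by
  -- write `c` as `w → x ⋯ p ⋯ y → w`; (C2) applies to the inner path `p`
  obtain ⟨x, h₁, q, rfl⟩ := not_nil_iff.1 hc.1.not_nil
  have hq : ¬ q.Nil := not_nil_iff_lt_length.2 (by simp at hlen; omega)
  obtain ⟨y, p, h₂, rfl⟩ : ∃ y, ∃ (p : G.Walk x y) (h₂ : G.Adj y w), q = p.concat h₂ :=
    ⟨_, _, _, (concat_dropLast (adj_penultimate hq)).symm⟩
  simp only [length_cons, length_concat] at hlen ⊢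
  obtain ⟨hp, hwp⟩ := hc.isPath_and_notMem_of_cons_concat
  have hpi := hc.isInducedPath_of_cons_concat
  have hxy : x ≠ y := by
    rintro rfl
    simp [(isPath_iff_nil.1 hp).length_eq_zero] at hlen
  have hnxy : ¬ G.Adj x y := fun h => hp.mk_notMem_edges_of_two_le_length (by omega)
    (hpi.2 x y p.start_mem_support p.end_mem_support h)
  have := hC2 x y h₁ h₂.symm hnxy hxy p hpi fun u ⟨hu, hux, huy⟩ =>
    ⟨ne_of_mem_of_not_mem hu hwp, fun h => (hc.eq_or_eq_of_adj_of_cons_concat hu h).elim hux huy⟩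
  omega

lemma length_le_of_simpC2_of_mem_support [DecidableEq V] {v w : V} {c : G.Walk v v}
    (hc : IsInducedCycle G c) (hw : w ∈ c.support) (hlen : 4 ≤ c.length)
    (hC2 : SimpC2 G k w) : c.length ≤ k := by
  simpa using (hc.rotate hw).length_le_of_simpC2 (by simpa using hlen) hC2

end IsInducedCycle

theorem stmt16 [Fintype V] (G : SimpleGraph V) (k : ℕ) (hk : 3 ≤ k)
    (σ : Fin (Fintype.card V) ≃ V) (hσ : KSimplicialOrdering G k σ) :
    ∀ (v : V) (c : G.Walk v v), IsInducedCycle G c → ¬ (k + 1 ≤ c.length) := by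
  classical
  intro v c hc hlen
  obtain ⟨w, hw, hmin⟩ := c.support.toFinset.exists_min_image σ.symm ⟨v, by simp⟩
  obtain ⟨i, rfl⟩ := σ.surjective w
  simp only [List.mem_toFinset, Equiv.symm_apply_apply] at hw hmin
  have hs : ∀ u ∈ c.support, u ∈ laterSet σ i := hmin
  have hle := (hc.induce hs).length_le_of_simpC2_of_mem_support
    ((mem_support_induce_iff c hs ⟨σ i, _⟩).2 hw) (by rw [length_induce]; omega) (hσ i).2
  rw [length_induce] at hle
  omega
end
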